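/- arXiv:1612.05552 — 4 statements merged into one kernel-verified Lean document; each statement's English description precedes it below -/
import Mathlib

section
/- Let λ > 1, M ≥ 2 an integer, |I₀| > 0, and define for a message sequence m : ℕ → Fin M the estimate x̂(m, t) = λ^t · ( x̂₀ + (|I₀|/2) · ∑_{i=0}^{t} (1/M^i) · ((2·m(i)+1)/M − 1) ), where x̂₀ is the midpoint of I₀. If m and m' are message sequences that differ in at least one coordinate in {0,...,t}, then |x̂(m,t) − x̂(m',t)| ≥ (|I₀|/M)·(λ/M)^t. -/
lemma key_int (M : ℕ) (hM : 2 ≤ M) (d : ℕ → ℤ) (hd : ∀ i, |d i| ≤ (M : ℤ) - 1) :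
    ∀ t, (∃ i ≤ t, d i ≠ 0) →
      ∑ i ∈ Finset.range (t + 1), d i * (M : ℤ) ^ (t - i) ≠ 0 := by
  intro t
  induction t with
  | zero =>
    rintro ⟨i, hi, hne⟩
    interval_cases i
    simpa using hne
  | succ t ih =>
    rintro ⟨i, hi, hne⟩
    have hsplit : ∑ i ∈ Finset.range (t + 2), d i * (M : ℤ) ^ (t + 1 - i)
        = (M : ℤ) * ∑ i ∈ Finset.range (t + 1), d i * (M : ℤ) ^ (t - i) + d (t + 1) := by
      rw [Finset.sum_range_succ, Finset.mul_sum]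
      congr 1
      · apply Finset.sum_congr rfl
        intro j hj
        have hj' : j ≤ t := Nat.lt_succ_iff.mp (Finset.mem_range.mp hj)
        have : t + 1 - j = (t - j) + 1 := by omega
        rw [this, pow_succ]
        ring
      · simp
    rw [hsplit]
    by_cases h' : ∃ i ≤ t, d i ≠ 0
    · have hS := ih h'
      set S := ∑ i ∈ Finset.range (t + 1), d i * (M : ℤ) ^ (t - i) with hSdef
      have h1 : 1 ≤ |S| := Int.one_le_abs hS
      have h2 : (M : ℤ) ≤ |(M : ℤ) * S| := by
        rw [abs_mul, abs_of_nonneg (by positivity : (0:ℤ) ≤ (M:ℤ))]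
        nlinarith
      have h3 : |d (t + 1)| ≤ (M : ℤ) - 1 := hd _
      intro hzero
      have : (M : ℤ) * S = -d (t + 1) := by linarith [eq_neg_of_add_eq_zero_left hzero]
      rw [this, abs_neg] at h2
      omega
    · push_neg at h'
      have hsum0 : ∑ i ∈ Finset.range (t + 1), d i * (M : ℤ) ^ (t - i) = 0 := by
        apply Finset.sum_eq_zero
        intro j hj
        rw [h' j (Nat.lt_succ_iff.mp (Finset.mem_range.mp hj))]
        ring
      have hi1 : i = t + 1 := by
        by_contra h
        exact hne (h' i (by omega))
      rw [hsum0, mul_zero, zero_add]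
      rw [hi1] at hne
      exact hne

theorem stmt_3 (lam I0 x0 : ℝ) (M : ℕ) (hM : 2 ≤ M) (hlam : 1 < lam)
    (hI : 0 < I0) (m m' : ℕ → Fin M) (t : ℕ)
    (hdiff : ∃ i ≤ t, m i ≠ m' i) :
    |(lam ^ t * (x0 + (I0 / 2) * ∑ i ∈ Finset.range (t + 1),
        (1 / (M : ℝ) ^ i) * ((2 * ((m i : ℕ) : ℝ) + 1) / M - 1)))
      - (lam ^ t * (x0 + (I0 / 2) * ∑ i ∈ Finset.range (t + 1),
        (1 / (M : ℝ) ^ i) * ((2 * ((m' i : ℕ) : ℝ) + 1) / M - 1)))|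
      ≥ (I0 / M) * (lam / M) ^ t := by
  have hM0 : (0:ℝ) < (M : ℝ) := by exact_mod_cast Nat.lt_of_lt_of_le (by norm_num) hM
  set d : ℕ → ℤ := fun i => ((m i : ℕ) : ℤ) - ((m' i : ℕ) : ℤ) with hd_def
  have hd : ∀ i, |d i| ≤ (M : ℤ) - 1 := by
    intro i
    have h1 := (m i).isLt
    have h2 := (m' i).isLt
    rw [abs_le]
    constructor <;> [skip; skip] <;> simp only [hd_def] <;> omega
  have hdne : ∃ i ≤ t, d i ≠ 0 := by
    obtain ⟨i, hi, hne⟩ := hdiff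
    refine ⟨i, hi, ?_⟩
    simp only [hd_def, sub_ne_zero]
    intro h
    exact hne (Fin.ext (by exact_mod_cast h))
  have hS := key_int M hM d hd t hdne
  set S : ℤ := ∑ i ∈ Finset.range (t + 1), d i * (M : ℤ) ^ (t - i) with hSdef
  -- rewrite difference
  have hrw : (lam ^ t * (x0 + (I0 / 2) * ∑ i ∈ Finset.range (t + 1),
        (1 / (M : ℝ) ^ i) * ((2 * ((m i : ℕ) : ℝ) + 1) / M - 1)))
      - (lam ^ t * (x0 + (I0 / 2) * ∑ i ∈ Finset.range (t + 1),
        (1 / (M : ℝ) ^ i) * ((2 * ((m' i : ℕ) : ℝ) + 1) / M - 1)))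
      = lam ^ t * (I0 / M) * ((S : ℝ) / (M : ℝ) ^ t) := by
    have hsum : (S : ℝ) / (M : ℝ) ^ t
        = ∑ i ∈ Finset.range (t + 1), ((d i : ℝ)) / (M : ℝ) ^ i := by
      rw [hSdef]
      push_cast
      rw [Finset.sum_div]
      apply Finset.sum_congr rfl
      intro i hi
      have hi' : i ≤ t := Nat.lt_succ_iff.mp (Finset.mem_range.mp hi)
      have hpow : (M : ℝ) ^ (t - i) * (M : ℝ) ^ i = (M : ℝ) ^ t := by
        rw [← pow_add, Nat.sub_add_cancel hi']
      rw [div_eq_div_iff (by positivity) (by positivity)]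
      linear_combination ((d i : ℤ) : ℝ) * hpow
    rw [hsum, mul_add, mul_add, add_sub_add_left_eq_sub, ← mul_sub, ← mul_sub,
      ← Finset.sum_sub_distrib, Finset.mul_sum, Finset.mul_sum, Finset.mul_sum]
    apply Finset.sum_congr rfl
    intro i hi
    simp only [hd_def]
    push_cast
    field_simp
    ring
  rw [hrw]
  have hSabs : (1 : ℝ) ≤ |(S : ℝ)| := by
    have := Int.one_le_abs hS
    exact_mod_cast this
  have hlam0 : (0:ℝ) < lam ^ t := by positivity
  have habs : |lam ^ t * (I0 / M) * ((S : ℝ) / (M:ℝ) ^ t)|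
      = lam ^ t * (I0 / M) * (|(S : ℝ)| / (M:ℝ) ^ t) := by
    rw [abs_mul, abs_div, abs_of_nonneg (by positivity : (0:ℝ) ≤ lam ^ t * (I0 / M)),
      abs_of_nonneg (by positivity : (0:ℝ) ≤ (M:ℝ) ^ t)]
  rw [habs, ge_iff_le]
  have h1 : I0 / M * (lam / M) ^ t = lam ^ t * (I0 / M) * (1 / (M:ℝ) ^ t) := by
    rw [div_pow]; ring
  rw [h1]
  apply mul_le_mul_of_nonneg_left _ (by positivity)
  rw [div_le_div_iff₀ (by positivity) (by positivity)]
  nlinarith [hSabs, pow_pos hM0 t]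
end

section
/- Let T_B : A → Set B and T_C : A → Set C be uncertain channels (nonempty output sets). Suppose F : Fin M₁ → Set (A^{n₁}) is a zero-error wiretap (n₁, M₁)-code for (T_B, T_C) with M₁ ≥ 2, and G : Fin M₂ → Set (A^{n₂}) is a zero-error (n₂, M₂)-code for T_B. Then the product code F × G : Fin M₁ × Fin M₂ → Set (A^{n₁+n₂}), defined by (F×G)(m₁,m₂) = F(m₁) × G(m₂), is a zero-error wiretap (n₁+n₂, M₁·M₂)-code for (T_B, T_C). -/
/-- The `n`-fold product of an uncertain channel. -/
def chanPow {A B : Type*} (T : A → Set B) (n : ℕ) :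
    (Fin n → A) → Set (Fin n → B) :=
  fun a => {b | ∀ i, b i ∈ T (a i)}

theorem stmt_7 {A B C : Type*} (TB : A → Set B) (TC : A → Set C)
    (hTB : ∀ a, (TB a).Nonempty) (hTC : ∀ a, (TC a).Nonempty)
    (n₁ n₂ M₁ M₂ : ℕ) (hM₁ : 2 ≤ M₁)
    (F : Fin M₁ → Set (Fin n₁ → A)) (G : Fin M₂ → Set (Fin n₂ → A))
    -- F is an M₁-code on A^{n₁}
    (hFne : ∀ m, (F m).Nonempty)
    (hFdisj : ∀ m m', m ≠ m' → F m ∩ F m' = ∅)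
    -- F is zero-error for T_B^{n₁}
    (hFze : ∀ m m', m ≠ m' →
      (⋃ a ∈ F m, chanPow TB n₁ a) ∩ (⋃ a ∈ F m', chanPow TB n₁ a) = ∅)
    -- F is a wiretap code for (T_B,T_C): every eavesdropper output is
    -- generated by at least two messages
    (hFsec : ∀ c : Fin n₁ → C, (∃ m, ∃ a ∈ F m, c ∈ chanPow TC n₁ a) →
      ∃ m m', m ≠ m' ∧ (∃ a ∈ F m, c ∈ chanPow TC n₁ a) ∧
        (∃ a ∈ F m', c ∈ chanPow TC n₁ a))
    -- G is an M₂-code on A^{n₂}, zero-error for T_B^{n₂}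
    (hGne : ∀ m, (G m).Nonempty)
    (hGdisj : ∀ m m', m ≠ m' → G m ∩ G m' = ∅)
    (hGze : ∀ m m', m ≠ m' →
      (⋃ a ∈ G m, chanPow TB n₂ a) ∩ (⋃ a ∈ G m', chanPow TB n₂ a) = ∅) :
    -- the product code F × G (on the concatenated alphabet
    -- A^{n₁} × A^{n₂} ≃ A^{n₁+n₂}) is a zero-error wiretap code
    (∀ p : Fin M₁ × Fin M₂, (F p.1 ×ˢ G p.2).Nonempty) ∧
    (∀ p p' : Fin M₁ × Fin M₂, p ≠ p' →
      (F p.1 ×ˢ G p.2) ∩ (F p'.1 ×ˢ G p'.2) = ∅) ∧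
    (∀ p p' : Fin M₁ × Fin M₂, p ≠ p' →
      (⋃ a ∈ F p.1 ×ˢ G p.2, chanPow TB n₁ a.1 ×ˢ chanPow TB n₂ a.2) ∩
        (⋃ a ∈ F p'.1 ×ˢ G p'.2, chanPow TB n₁ a.1 ×ˢ chanPow TB n₂ a.2) = ∅) ∧
    (∀ c : (Fin n₁ → C) × (Fin n₂ → C),
      (∃ p : Fin M₁ × Fin M₂, ∃ a ∈ F p.1 ×ˢ G p.2,
        c.1 ∈ chanPow TC n₁ a.1 ∧ c.2 ∈ chanPow TC n₂ a.2) →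
      ∃ p p' : Fin M₁ × Fin M₂, p ≠ p' ∧
        (∃ a ∈ F p.1 ×ˢ G p.2,
          c.1 ∈ chanPow TC n₁ a.1 ∧ c.2 ∈ chanPow TC n₂ a.2) ∧
        (∃ a ∈ F p'.1 ×ˢ G p'.2,
          c.1 ∈ chanPow TC n₁ a.1 ∧ c.2 ∈ chanPow TC n₂ a.2)) := by
  refine ⟨?_, ?_, ?_, ?_⟩
  · rintro ⟨m₁, m₂⟩
    exact (hFne m₁).prod (hGne m₂)
  · rintro ⟨m₁, m₂⟩ ⟨m₁', m₂'⟩ hne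
    ext ⟨a₁, a₂⟩
    simp only [Set.mem_inter_iff, Set.mem_prod, Set.mem_empty_iff_false, iff_false]
    rintro ⟨⟨h1, h2⟩, ⟨h3, h4⟩⟩
    rcases eq_or_ne m₁ m₁' with rfl | h
    · rcases eq_or_ne m₂ m₂' with rfl | h2'
      · exact hne rfl
      · exact Set.eq_empty_iff_forall_notMem.mp (hGdisj _ _ h2') a₂ ⟨h2, h4⟩
    · exact Set.eq_empty_iff_forall_notMem.mp (hFdisj _ _ h) a₁ ⟨h1, h3⟩
  · rintro ⟨m₁, m₂⟩ ⟨m₁', m₂'⟩ hne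
    ext ⟨b₁, b₂⟩
    simp only [Set.mem_inter_iff, Set.mem_iUnion, Set.mem_prod, Set.mem_empty_iff_false,
      iff_false, not_and]
    rintro ⟨⟨a₁, a₂⟩, ⟨ha1, ha2⟩, hb1, hb2⟩ ⟨⟨a₁', a₂'⟩, ⟨ha1', ha2'⟩, hb1', hb2'⟩
    rcases eq_or_ne m₁ m₁' with rfl | h
    · rcases eq_or_ne m₂ m₂' with rfl | h2'
      · exact hne rfl
      · exact Set.eq_empty_iff_forall_notMem.mp (hGze _ _ h2') b₂
          ⟨Set.mem_biUnion ha2 hb2, Set.mem_biUnion ha2' hb2'⟩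
    · exact Set.eq_empty_iff_forall_notMem.mp (hFze _ _ h) b₁
        ⟨Set.mem_biUnion ha1 hb1, Set.mem_biUnion ha1' hb1'⟩
  · rintro ⟨c₁, c₂⟩ ⟨⟨m₁, m₂⟩, ⟨a₁, a₂⟩, ⟨ha1, ha2⟩, hc1, hc2⟩
    obtain ⟨m, m', hmm, ⟨b₁, hb1, hcb1⟩, ⟨b₁', hb1', hcb1'⟩⟩ :=
      hFsec c₁ ⟨m₁, a₁, ha1, hc1⟩
    exact ⟨(m, m₂), (m', m₂), by simp [hmm],
      ⟨(b₁, a₂), ⟨hb1, ha2⟩, hcb1, hc2⟩,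
      ⟨(b₁', a₂), ⟨hb1', ha2⟩, hcb1', hc2⟩⟩
end

section
/- Let T_B : A → Set B and T_C : A → Set C be uncertain channels over finite alphabets, and define C₀(T_B, T_C) = sup_{n≥1} (log N(n))/n, where N(n) is the maximal M ≥ 1 such that a zero-error wiretap (n,M)-code for (T_B,T_C) exists (with N(n)=1 if none exists with M ≥ 2). Suppose that (i) the product of a zero-error wiretap code with a zero-error code for T_B is a zero-error wiretap code, and (ii) C₀(T_B,T_C) > 0, i.e., some zero-error wiretap (n₁,M₁)-code with M₁ ≥ 2 exists. Then C₀(T_B,T_C) = C₀(T_B), where C₀(T_B) = sup_n (log N_{T_B}(n))/n with N_{T_B}(n) the maximal size of a zero-error (n,·)-code for T_B. -/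
/-- A zero-error `(n,M)`-code for `T` exists. -/
def HasZE {A B : Type*} (T : A → Set B) (n M : ℕ) : Prop :=
  ∃ F : Fin M → Set (Fin n → A),
    (∀ m, (F m).Nonempty) ∧
    (∀ m m', m ≠ m' → F m ∩ F m' = ∅) ∧
    (∀ m m', m ≠ m' →
      (⋃ a ∈ F m, chanPow T n a) ∩ (⋃ a ∈ F m', chanPow T n a) = ∅)

/-- A zero-error wiretap `(n,M)`-code for `(T_B,T_C)` exists. -/
def HasWT {A B C : Type*} (TB : A → Set B) (TC : A → Set C) (n M : ℕ) : Prop :=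
  ∃ F : Fin M → Set (Fin n → A),
    (∀ m, (F m).Nonempty) ∧
    (∀ m m', m ≠ m' → F m ∩ F m' = ∅) ∧
    (∀ m m', m ≠ m' →
      (⋃ a ∈ F m, chanPow TB n a) ∩ (⋃ a ∈ F m', chanPow TB n a) = ∅) ∧
    (∀ c : Fin n → C, (∃ m, ∃ a ∈ F m, c ∈ chanPow TC n a) →
      ∃ m m', m ≠ m' ∧ (∃ a ∈ F m, c ∈ chanPow TC n a) ∧
        (∃ a ∈ F m', c ∈ chanPow TC n a))

/-- The maximal size of a zero-error code of blocklength `n`. -/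
noncomputable def NZE {A B : Type*} (T : A → Set B) (n : ℕ) : ℕ :=
  sSup {M | M = 1 ∨ HasZE T n M}

/-- The maximal size of a zero-error wiretap code of blocklength `n`. -/
noncomputable def NWT {A B C : Type*} (TB : A → Set B) (TC : A → Set C)
    (n : ℕ) : ℕ :=
  sSup {M | M = 1 ∨ HasWT TB TC n M}

/-!
Every wiretap code is a zero-error code for `T_B`, which gives `≤`. Conversely, concatenating a
wiretap code of length `n₁` with `k` copies of a zero-error code of length `m` with `M` messages
yields, by (i), wiretap codes of rate at least `k log M / (n₁ + k m)`, which tends to `log M / m`.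
Both suprema are finite because a code of length `n` has at most `|A|ⁿ` messages, its codeword
sets being disjoint and nonempty.
-/

open Filter Topology Set

section ZeroErrorCodes

variable {A B C : Type*} {TB : A → Set B} {TC : A → Set C}

theorem HasWT.hasZE {n M : ℕ} (h : HasWT TB TC n M) : HasZE TB n M :=
  let ⟨F, hne, hdisj, hout, _⟩ := h
  ⟨F, hne, hdisj, hout⟩

theorem HasWT.iterate
    (hprod : ∀ n₁ M₁ n₂ M₂, 1 ≤ n₁ → 1 ≤ n₂ →
      HasWT TB TC n₁ M₁ → HasZE TB n₂ M₂ → HasWT TB TC (n₁ + n₂) (M₁ * M₂))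
    {n₁ M₁ n₂ M₂ : ℕ} (hn₁ : 1 ≤ n₁) (hn₂ : 1 ≤ n₂)
    (hWT : HasWT TB TC n₁ M₁) (hZE : HasZE TB n₂ M₂) (k : ℕ) :
    HasWT TB TC (n₁ + k * n₂) (M₁ * M₂ ^ k) := by
  induction k with
  | zero => simpa using hWT
  | succ k ih =>
    convert hprod _ _ _ _ (le_add_right hn₁) hn₂ ih hZE using 1 <;> ring

theorem HasZE.le_card_pow [Fintype A] {n M : ℕ} (h : HasZE TB n M) :
    M ≤ Fintype.card A ^ n := by
  obtain ⟨F, hne, hdisj, -⟩ := h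
  choose a ha using hne
  have ha_inj : Function.Injective a := by
    intro m m' heq
    by_contra hmm'
    have : a m ∈ F m ∩ F m' := ⟨ha m, heq ▸ ha m'⟩
    simp [hdisj m m' hmm'] at this
  simpa using Fintype.card_le_of_injective a ha_inj

theorem setOf_hasWT_subset_setOf_hasZE (n : ℕ) :
    {M | M = 1 ∨ HasWT TB TC n M} ⊆ {M | M = 1 ∨ HasZE TB n M} :=
  fun _ hM => hM.imp_right HasWT.hasZE

variable [Fintype A] [Nonempty A]

theorem le_card_pow_of_mem_setOf_hasZE {n M : ℕ} (hM : M ∈ {M | M = 1 ∨ HasZE TB n M}) :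
    M ≤ Fintype.card A ^ n := by
  rcases hM with rfl | hM
  · exact Nat.one_le_pow _ _ Fintype.card_pos
  · exact hM.le_card_pow

theorem bddAbove_setOf_hasZE (n : ℕ) : BddAbove {M | M = 1 ∨ HasZE TB n M} :=
  ⟨_, fun _ => le_card_pow_of_mem_setOf_hasZE⟩

theorem one_le_NZE (n : ℕ) : 1 ≤ NZE TB n :=
  le_csSup (bddAbove_setOf_hasZE n) (Or.inl rfl)

theorem NZE_le_card_pow (n : ℕ) : NZE TB n ≤ Fintype.card A ^ n :=
  csSup_le ⟨1, Or.inl rfl⟩ fun _ => le_card_pow_of_mem_setOf_hasZE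

theorem NZE_eq_one_or_hasZE (n : ℕ) : NZE TB n = 1 ∨ HasZE TB n (NZE TB n) :=
  Nat.sSup_mem ⟨1, Or.inl rfl⟩ (bddAbove_setOf_hasZE n)

theorem le_NWT_of_hasWT {n M : ℕ} (h : HasWT TB TC n M) : M ≤ NWT TB TC n :=
  le_csSup ((bddAbove_setOf_hasZE n).mono (setOf_hasWT_subset_setOf_hasZE n)) (Or.inr h)

theorem one_le_NWT (n : ℕ) : 1 ≤ NWT TB TC n :=
  le_csSup ((bddAbove_setOf_hasZE n).mono (setOf_hasWT_subset_setOf_hasZE (TC := TC) n))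
    (Or.inl rfl)

theorem NWT_le_NZE (n : ℕ) : NWT TB TC n ≤ NZE TB n :=
  csSup_le_csSup (bddAbove_setOf_hasZE n) ⟨1, Or.inl rfl⟩ (setOf_hasWT_subset_setOf_hasZE n)

end ZeroErrorCodes

noncomputable def rate (N : ℕ → ℕ) (n : ℕ) : ℝ := Real.log (N (n + 1)) / (n + 1)

noncomputable def capacity (N : ℕ → ℕ) : ℝ := ⨆ n : ℕ, rate N n

section Capacity

variable {N N' : ℕ → ℕ}

theorem bddAbove_range_rate_of_le_pow {K : ℕ} (hpos : ∀ n, 0 < N n) (hK : ∀ n, N n ≤ K ^ n) :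
    BddAbove (range (rate N)) := by
  refine ⟨Real.log K, ?_⟩
  rintro _ ⟨n, rfl⟩
  rw [rate, div_le_iff₀ (by positivity)]
  calc Real.log (N (n + 1)) ≤ Real.log ((K : ℝ) ^ (n + 1)) :=
        Real.log_le_log (by exact_mod_cast hpos _) (by exact_mod_cast hK _)
    _ = Real.log K * (n + 1) := by rw [Real.log_pow]; push_cast; ring

theorem capacity_mono (hpos : ∀ n, 0 < N n) (hle : ∀ n, N n ≤ N' n)
    (hbdd : BddAbove (range (rate N'))) : capacity N ≤ capacity N' :=
  ciSup_mono hbdd fun n => div_le_div_of_nonneg_right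
    (Real.log_le_log (by exact_mod_cast hpos _) (by exact_mod_cast hle _)) (by positivity)

theorem capacity_nonneg (hbdd : BddAbove (range (rate N))) : 0 ≤ capacity N :=
  (div_nonneg (Real.log_natCast_nonneg _) (by positivity)).trans (le_ciSup hbdd 0)

theorem tendsto_natCast_mul_div_natCast_mul_add (a b c : ℝ) (hc : c ≠ 0) :
    Tendsto (fun k : ℕ => k * a / (k * c + b)) atTop (𝓝 (a / c)) := by
  have h := (tendsto_natCast_div_add_atTop (b / c)).const_mul (a / c)
  rw [mul_one] at h
  refine h.congr fun k => ?_
  rw [show (k : ℝ) + b / c = (k * c + b) / c by field_simp, div_div_eq_mul_div]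
  field_simp

/-- The rates `log (M₀ M ^ k) / (n₀ + 1 + k (m + 1))` tend to `log M / (m + 1)` as `k → ∞`. -/
theorem log_div_le_capacity (hbdd : BddAbove (range (rate N))) {n₀ m M₀ M : ℕ} (hM₀ : 0 < M₀)
    (hM : 0 < M) (h : ∀ k, M₀ * M ^ k ≤ N (n₀ + 1 + k * (m + 1))) :
    Real.log M / (m + 1) ≤ capacity N := by
  refine le_of_tendsto' (tendsto_natCast_mul_div_natCast_mul_add _ (n₀ + 1) _ (by positivity))
    fun k => (?_ : _ ≤ rate N (n₀ + k * (m + 1))).trans (le_ciSup hbdd _)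
  rw [rate, Nat.add_right_comm]
  push_cast
  rw [show (n₀ : ℝ) + k * (m + 1) + 1 = k * (m + 1) + (n₀ + 1) by ring]
  gcongr
  calc k * Real.log M ≤ Real.log M₀ + k * Real.log M :=
        le_add_of_nonneg_left (Real.log_natCast_nonneg _)
    _ = Real.log ((M₀ * M ^ k : ℕ) : ℝ) := by
        push_cast
        rw [Real.log_mul (by positivity) (by positivity), Real.log_pow]
    _ ≤ Real.log (N (n₀ + 1 + k * (m + 1))) :=
        Real.log_le_log (by positivity) (by exact_mod_cast h k)

end Capacity

theorem stmt_9_general {A B C : Type*} [Fintype A]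
    (TB : A → Set B) (TC : A → Set C)
    -- (i) products of wiretap codes with zero-error codes are wiretap codes
    (hprod : ∀ n₁ M₁ n₂ M₂, 1 ≤ n₁ → 1 ≤ n₂ →
      HasWT TB TC n₁ M₁ → HasZE TB n₂ M₂ → HasWT TB TC (n₁ + n₂) (M₁ * M₂))
    -- (ii) positive zero-error secrecy capacity: some secure code exists
    (hpos : ∃ n₁ M₁, 1 ≤ n₁ ∧ 2 ≤ M₁ ∧ HasWT TB TC n₁ M₁) :
    (⨆ n : ℕ, Real.log (NWT TB TC (n + 1)) / (n + 1))
      = (⨆ n : ℕ, Real.log (NZE TB (n + 1)) / (n + 1)) := by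
  obtain ⟨n₁, M₁, hn₁, hM₁, hWT⟩ := hpos
  have : Nonempty A := by
    obtain ⟨F, hne, -⟩ := hWT
    exact ⟨(hne ⟨0, by omega⟩).some ⟨0, hn₁⟩⟩
  have hbddZE : BddAbove (range (rate (NZE TB))) :=
    bddAbove_range_rate_of_le_pow one_le_NZE NZE_le_card_pow
  have hbddWT : BddAbove (range (rate (NWT TB TC))) :=
    bddAbove_range_rate_of_le_pow one_le_NWT fun n => (NWT_le_NZE n).trans (NZE_le_card_pow n)
  change capacity (NWT TB TC) = capacity (NZE TB)
  refine le_antisymm (capacity_mono one_le_NWT NWT_le_NZE hbddZE) (ciSup_le fun m => ?_)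
  rcases NZE_eq_one_or_hasZE (TB := TB) (m + 1) with hone | hZE
  · simpa [rate, hone] using capacity_nonneg hbddWT
  · obtain ⟨n₀, rfl⟩ := Nat.exists_eq_add_of_le' hn₁
    exact log_div_le_capacity hbddWT (by omega) (one_le_NZE _)
      fun k => le_NWT_of_hasWT (hWT.iterate hprod hn₁ m.succ_pos hZE k)

theorem stmt_9 {A B C : Type*} [Fintype A] [Fintype B] [Fintype C]
    (TB : A → Set B) (TC : A → Set C)
    (hTB : ∀ a, (TB a).Nonempty) (hTC : ∀ a, (TC a).Nonempty)
    -- (i) products of wiretap codes with zero-error codes are wiretap codes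
    (hprod : ∀ n₁ M₁ n₂ M₂, 1 ≤ n₁ → 1 ≤ n₂ →
      HasWT TB TC n₁ M₁ → HasZE TB n₂ M₂ → HasWT TB TC (n₁ + n₂) (M₁ * M₂))
    -- (ii) positive zero-error secrecy capacity: some secure code exists
    (hpos : ∃ n₁ M₁, 1 ≤ n₁ ∧ 2 ≤ M₁ ∧ HasWT TB TC n₁ M₁) :
    (⨆ n : ℕ, Real.log (NWT TB TC (n + 1)) / (n + 1))
      = (⨆ n : ℕ, Real.log (NZE TB (n + 1)) / (n + 1)) :=
  stmt_9_general TB TC hprod hpos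
end

section
/- Let λ, M be reals with M > λ > 1, Ω ≥ 0, |I₀| ≥ 0, and consider two message sequences m, m' : ℕ → Fin M with quantizer estimates x̂(m,t) satisfying the recursion x̂(m,t+1) = λ·x̂(m,t) + ((λ·ℓ(t)+Ω)/2)·((2·m(t+1)+1)/M − 1), where ℓ(t) is the quantizer interval length at time t. If at some time T, |x̂(m,T) − x̂(m',T)| ≥ (Ω/(M−λ))·((M−1)/(λ−1)) + ℓ(T), then for all t ≥ 0, |x̂(m, T+t) − x̂(m', T+t)| ≥ ℓ(T+t). -/
/-!
The difference `d t = x̂(m,t) - x̂(m',t)` of two estimates is multiplied by `λ` at each step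
and then perturbed by at most `(λ ℓ(t) + Ω)(M - 1)/M`, the largest distance between two cell
centres of the quantizer. Writing `C = Ω/(M-λ) · (M-1)/(λ-1)`, the invariant
`|d t| ≥ C + ℓ(t)` is preserved: since `ℓ(t+1) = (λ/M) ℓ(t) + Ω/M`, the loss in one step is
compensated because `C (λ - 1) = Ω (M-1)/(M-λ) ≥ Ω`. As `C ≥ 0`, `|d t| ≥ ℓ(t)` follows.
-/

noncomputable def quantizerLength (lam M Ω I0 : ℝ) (t : ℕ) : ℝ :=
  (lam / M) ^ t * (I0 / M - Ω / (M - lam)) + Ω / (M - lam)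

section QuantizerLength

variable {lam M Ω I0 : ℝ}

lemma quantizerLength_zero : quantizerLength lam M Ω I0 0 = I0 / M := by
  simp [quantizerLength]

lemma quantizerLength_succ (hM : M ≠ 0) (hMl : M - lam ≠ 0) (t : ℕ) :
    quantizerLength lam M Ω I0 (t + 1) = lam / M * quantizerLength lam M Ω I0 t + Ω / M := by
  simp only [quantizerLength, pow_succ]
  field_simp
  ring

lemma quantizerLength_nonneg (hlam : 0 ≤ lam) (hM : lam < M) (hΩ : 0 ≤ Ω) (hI : 0 ≤ I0)
    (t : ℕ) : 0 ≤ quantizerLength lam M Ω I0 t := by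
  have hM0 : 0 < M := hlam.trans_lt hM
  induction t with
  | zero => rw [quantizerLength_zero]; positivity
  | succ t ih =>
    rw [quantizerLength_succ hM0.ne' (sub_pos.mpr hM).ne']
    positivity

end QuantizerLength

lemma abs_sub_cellCenter_le {n : ℕ} (a b : Fin n) :
    |((2 * (a : ℕ) + 1) / n - 1 : ℝ) - ((2 * (b : ℕ) + 1) / n - 1)| ≤ 2 * (n - 1) / n := by
  have hn : (0 : ℝ) < n := by exact_mod_cast a.pos
  have ha : ((a : ℕ) : ℝ) + 1 ≤ n := by exact_mod_cast a.isLt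
  have hb : ((b : ℕ) : ℝ) + 1 ≤ n := by exact_mod_cast b.isLt
  have hab : |((a : ℕ) : ℝ) - b| ≤ n - 1 := by
    rw [abs_le]
    constructor <;> linarith [(a : ℕ).cast_nonneg (α := ℝ), (b : ℕ).cast_nonneg (α := ℝ)]
  calc |((2 * (a : ℕ) + 1) / n - 1 : ℝ) - ((2 * (b : ℕ) + 1) / n - 1)|
      = |2 * (((a : ℕ) : ℝ) - b) / n| := by congr 1; field_simp; ring
    _ = 2 * |((a : ℕ) : ℝ) - b| / n := by rw [abs_div, abs_mul, abs_two, abs_of_pos hn]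
    _ ≤ 2 * (n - 1) / n := by gcongr

lemma abs_sub_sub_mul_sub_le_of_update {n : ℕ} {lam c x x' y y' : ℝ} (hc : 0 ≤ c) (a b : Fin n)
    (hy : y = lam * x + c / 2 * ((2 * (a : ℕ) + 1) / n - 1))
    (hy' : y' = lam * x' + c / 2 * ((2 * (b : ℕ) + 1) / n - 1)) :
    |y - y' - lam * (x - x')| ≤ c * (n - 1) / n :=
  calc |y - y' - lam * (x - x')|
      = c / 2 * |((2 * (a : ℕ) + 1) / n - 1 : ℝ) - ((2 * (b : ℕ) + 1) / n - 1)| := by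
        rw [← abs_of_nonneg (by positivity : (0 : ℝ) ≤ c / 2), ← abs_mul, hy, hy']; congr 1; ring
    _ ≤ c / 2 * (2 * (n - 1) / n) := by gcongr; exact abs_sub_cellCenter_le a b
    _ = c * (n - 1) / n := by ring

lemma le_abs_add_of_le_abs {lam C : ℝ} {d ℓ ε : ℕ → ℝ} (hlam : 0 ≤ lam)
    (hstep : ∀ t, |d (t + 1) - lam * d t| ≤ ε t)
    (hmargin : ∀ t, C + ℓ (t + 1) ≤ lam * (C + ℓ t) - ε t)
    {T : ℕ} (hT : C + ℓ T ≤ |d T|) (t : ℕ) : C + ℓ (T + t) ≤ |d (T + t)| := by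
  induction t with
  | zero => exact hT
  | succ t ih =>
    have hgrow : lam * (C + ℓ (T + t)) ≤ |lam * d (T + t)| := by
      rw [abs_mul, abs_of_nonneg hlam]; gcongr
    have hrev := abs_sub_abs_le_abs_sub (lam * d (T + t)) (d (T + t + 1))
    rw [abs_sub_comm] at hrev
    rw [← add_assoc]
    linarith [hmargin (T + t), hstep (T + t)]

lemma separation_margin {lam M Ω : ℝ} (hlam : 1 < lam) (hM : lam < M) (hΩ : 0 ≤ Ω) (x : ℝ) :
    Ω / (M - lam) * ((M - 1) / (lam - 1)) + (lam / M * x + Ω / M) ≤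
      lam * (Ω / (M - lam) * ((M - 1) / (lam - 1)) + x) - (lam * x + Ω) * (M - 1) / M := by
  have hM0 : M ≠ 0 := by linarith
  have hMl : 0 < M - lam := sub_pos.mpr hM
  have hl1 : lam - 1 ≠ 0 := by linarith
  set C := Ω / (M - lam) * ((M - 1) / (lam - 1))
  have hΩC : Ω ≤ C * (lam - 1) := by
    have hC : C * (lam - 1) = Ω * (M - 1) / (M - lam) := by simp only [C]; field_simp
    rw [hC, le_div_iff₀ hMl]
    nlinarith
  have hgap : lam * (C + x) - (lam * x + Ω) * (M - 1) / M - (C + (lam / M * x + Ω / M)) =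
      C * (lam - 1) - Ω := by
    field_simp
    ring
  linarith

theorem stmt_13 (lam Ω I0 : ℝ) (Mn : ℕ) (hlam : 1 < lam) (hM : lam < (Mn : ℝ))
    (hΩ : 0 ≤ Ω) (hI : 0 ≤ I0) (ℓ : ℕ → ℝ)
    (hℓ : ∀ t, ℓ t = (lam / Mn) ^ t * (I0 / Mn - Ω / ((Mn : ℝ) - lam))
      + Ω / ((Mn : ℝ) - lam))
    (m m' : ℕ → Fin Mn) (xh xh' : ℕ → ℝ)
    (hrec : ∀ t, xh (t + 1) = lam * xh t +
      ((lam * ℓ t + Ω) / 2) * ((2 * ((m (t + 1) : ℕ) : ℝ) + 1) / Mn - 1))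
    (hrec' : ∀ t, xh' (t + 1) = lam * xh' t +
      ((lam * ℓ t + Ω) / 2) * ((2 * ((m' (t + 1) : ℕ) : ℝ) + 1) / Mn - 1))
    (T : ℕ)
    (hsep : |xh T - xh' T| ≥
      (Ω / ((Mn : ℝ) - lam)) * (((Mn : ℝ) - 1) / (lam - 1)) + ℓ T) :
    ∀ t, |xh (T + t) - xh' (T + t)| ≥ ℓ (T + t) := by
  intro t
  have hM0 : (Mn : ℝ) ≠ 0 := by linarith
  have hMl : (0 : ℝ) < Mn - lam := sub_pos.mpr hM
  have hℓfun : ℓ = quantizerLength lam Mn Ω I0 := funext hℓ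
  have hℓ0 (s : ℕ) : 0 ≤ ℓ s := hℓfun ▸ quantizerLength_nonneg (by linarith) hM hΩ hI s
  set C := Ω / ((Mn : ℝ) - lam) * (((Mn : ℝ) - 1) / (lam - 1))
  have hC : 0 ≤ C := mul_nonneg (div_nonneg hΩ hMl.le) (div_nonneg (by linarith) (by linarith))
  have hstep (s : ℕ) :=
    abs_sub_sub_mul_sub_le_of_update (by have := hℓ0 s; positivity) _ _ (hrec s) (hrec' s)
  have hmargin (s : ℕ) : C + ℓ (s + 1) ≤ lam * (C + ℓ s) - (lam * ℓ s + Ω) * (Mn - 1) / Mn := by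
    rw [hℓfun, quantizerLength_succ hM0 hMl.ne']
    exact separation_margin hlam hM hΩ _
  have hinv :=
    le_abs_add_of_le_abs (d := fun t => xh t - xh' t) (by linarith) hstep hmargin hsep t
  linarith
end
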